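/- (Ahmadi–Parrilo) A polynomial f ∈ ℝ[x₁, …, xₙ] is SOS-convex — i.e., there exist a ∈ ℕ and an n×a matrix L of polynomials in ℝ[x₁, …, xₙ] such that the Hessian matrix H(f) with entries H_{ij} = ∂²f/∂x_i∂x_j satisfies H(f) = L·Lᵀ — if and only if the polynomial ∑_{i,j} z_i z_j · ∂²f/∂x_i∂x_j, regarded as an element of the polynomial ring ℝ[x₁, …, xₙ, z₁, …, zₙ] in 2n variables, is a sum of squares of polynomials. -/

import Mathlib

/-!
Transport the polynomial to `(ℝ[x])[z]`, where it is the quadratic form `zᵀ H z` of the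
Hessian `H`. If `H = L Lᵀ` then `zᵀ H z = ∑ₖ (∑ᵢ Lᵢₖ zᵢ)²`. Conversely, if `zᵀ H z = ∑ₖ qₖ²`, the
top-degree components (in `z`) of the `qₖ` of highest degree would form a vanishing sum of
nonzero squares, impossible in the formally real ring `(ℝ[x])[z]`; so every `qₖ` has degree at
most one in `z` and its partial derivatives are constants `Lᵢₖ ∈ ℝ[x]`. Applying `∂ᵢ∂ⱼ`
to both sides gives `2 Hᵢⱼ = 2 ∑ₖ Lᵢₖ Lⱼₖ`; the constant terms of the `qₖ` never matter.
-/

open MvPolynomial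

section SumsOfSquares

variable {R S : Type*}

theorem IsSumSq.map [NonUnitalNonAssocSemiring R] [NonUnitalNonAssocSemiring S]
    {F : Type*} [FunLike F R S] [NonUnitalRingHomClass F R S] (f : F) {a : R}
    (h : IsSumSq a) : IsSumSq (f a) := by
  induction h with
  | zero => simp
  | sq_add a _ ih => simpa using IsSumSq.sq_add (f a) ih

theorem isSumSq_map_iff [NonUnitalNonAssocSemiring R] [NonUnitalNonAssocSemiring S]
    (e : R ≃+* S) {a : R} : IsSumSq (e a) ↔ IsSumSq a :=
  ⟨fun h => by simpa using h.map e.symm, (·.map e)⟩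

theorem IsSumSq.exists_eq_sum_mul_self [AddCommMonoid R] [Mul R] {a : R} (h : IsSumSq a) :
    ∃ (k : ℕ) (q : Fin k → R), a = ∑ i, q i * q i := by
  induction h with
  | zero => exact ⟨0, Fin.elim0, by simp⟩
  | sq_add a _ ih =>
    obtain ⟨k, q, rfl⟩ := ih
    exact ⟨k + 1, Fin.cons a q, by simp [Fin.sum_univ_succ]⟩

namespace IsFormallyReal

theorem eq_zero_of_mul_self_eq_zero [NonUnitalNonAssocSemiring R] [IsFormallyReal R] {a : R}
    (h : a * a = 0) : a = 0 := by
  by_contra ha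
  exact not_isSumNonzeroSq_zero (h ▸ IsSumNonzeroSq.sq ha)

theorem eq_zero_of_sum_mul_self_eq_zero [NonUnitalNonAssocSemiring R] [IsFormallyReal R]
    {ι : Type*} {s : Finset ι} {q : ι → R} (h : ∑ i ∈ s, q i * q i = 0) {i : ι} (hi : i ∈ s) :
    q i = 0 := by
  classical
  rw [← Finset.add_sum_erase s _ hi] at h
  exact eq_zero_of_mul_self_eq_zero
    (eq_zero_of_add_right (.mul_self _) (.sum_mul_self _ _) h)

theorem two_mul_injective [NonAssocRing R] [IsFormallyReal R] :
    Function.Injective fun a : R => 2 * a := fun a b h => by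
  have hsq : (a - b) * (a - b) + (a - b) * (a - b) = 0 := by
    rw [← add_mul, ← two_mul, mul_sub (2 : R), sub_eq_zero.2 (h : 2 * a = 2 * b), zero_mul]
  exact sub_eq_zero.1 <| eq_zero_of_mul_self_eq_zero <|
    eq_zero_of_add_right (.mul_self _) (.mul_self _) hsq

theorem of_injective [NonUnitalNonAssocSemiring R] [NonUnitalNonAssocSemiring S]
    [IsFormallyReal S] {F : Type*} [FunLike F R S] [NonUnitalRingHomClass F R S] (f : F)
    (hf : Function.Injective f) : IsFormallyReal R :=
  of_eq_zero_of_eq_zero_of_mul_self_add fun {s a} hs h => by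
    apply hf
    rw [map_zero]
    refine eq_zero_of_mul_self_eq_zero (eq_zero_of_add_right (.mul_self _) (hs.map f) ?_)
    simpa using congrArg f h

end IsFormallyReal

end SumsOfSquares

instance {σ R : Type*} [CommRing R] [LinearOrder R] [IsStrictOrderedRing R] :
    IsFormallyReal (MvPolynomial σ R) :=
  .of_eq_zero_of_eq_zero_of_mul_self_add fun {s a} hs h => funext fun x => by
    refine IsFormallyReal.eq_zero_of_mul_self_eq_zero
      (IsFormallyReal.eq_zero_of_add_right (.mul_self _) (hs.map (eval x)) ?_)
    simpa using congrArg (eval x) h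

instance {σ τ R : Type*} [CommRing R] [LinearOrder R] [IsStrictOrderedRing R] :
    IsFormallyReal (MvPolynomial σ (MvPolynomial τ R)) :=
  .of_injective (sumAlgEquiv R σ τ).symm (sumAlgEquiv R σ τ).symm.injective

namespace MvPolynomial

variable {σ R : Type*} [CommSemiring R]

theorem pderiv_comm (i j : σ) (f : MvPolynomial σ R) :
    pderiv i (pderiv j f) = pderiv j (pderiv i f) := by
  classical
  induction f using MvPolynomial.induction_on with
  | C a => simp
  | add p q hp hq => simp [hp, hq]
  | mul_X p k hp =>
    simp only [pderiv_mul, map_add, hp, pderiv_X, Pi.single_apply]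
    split_ifs <;> simp only [pderiv_one, map_zero] <;> ring

noncomputable def hessian (f : MvPolynomial σ R) : Matrix σ σ (MvPolynomial σ R) :=
  Matrix.of fun i j => pderiv i (pderiv j f)

theorem isSymm_hessian (f : MvPolynomial σ R) : (hessian f).IsSymm :=
  Matrix.IsSymm.ext fun i j => pderiv_comm j i f

theorem homogeneousComponent_mul_of_totalDegree_le {p q : MvPolynomial σ R} {m n : ℕ}
    (hp : p.totalDegree ≤ m) (hq : q.totalDegree ≤ n) :
    homogeneousComponent (m + n) (p * q) =
      homogeneousComponent m p * homogeneousComponent n q := by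
  classical
  ext s
  simp only [coeff_homogeneousComponent, coeff_mul]
  split_ifs with hs
  · refine Finset.sum_congr rfl fun x hx => ?_
    by_cases h1 : coeff x.1 p = 0
    · simp [h1]
    by_cases h2 : coeff x.2 q = 0
    · simp [h2]
    have d1 : x.1.degree ≤ m := (le_totalDegree (mem_support_iff.2 h1)).trans hp
    have d2 : x.2.degree ≤ n := (le_totalDegree (mem_support_iff.2 h2)).trans hq
    have hdeg : x.1.degree + x.2.degree = m + n := by
      rw [← map_add, Finset.HasAntidiagonal.mem_antidiagonal.1 hx, hs]
    rw [if_pos (by omega), if_pos (by omega)]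
  · refine (Finset.sum_eq_zero fun x hx => ?_).symm
    rw [← Finset.HasAntidiagonal.mem_antidiagonal.1 hx, map_add] at hs
    split_ifs <;> simp_all

theorem homogeneousComponent_totalDegree_eq_zero_iff {p : MvPolynomial σ R} :
    homogeneousComponent p.totalDegree p = 0 ↔ p = 0 := by
  refine ⟨fun h => ?_, fun h => by simp [h]⟩
  by_contra hp
  obtain ⟨s, hs, hsp⟩ := Finset.exists_mem_eq_sup p.support (support_nonempty.2 hp)
    fun s => s.sum fun _ e => e
  have := congrArg (coeff s) h
  rw [coeff_homogeneousComponent, if_pos (by exact hsp.symm), coeff_zero] at this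
  exact mem_support_iff.1 hs this

theorem totalDegree_le_of_totalDegree_sum_mul_self_le [IsFormallyReal (MvPolynomial σ R)]
    {ι : Type*} {s : Finset ι} {q : ι → MvPolynomial σ R} {d : ℕ}
    (h : (∑ i ∈ s, q i * q i).totalDegree ≤ 2 * d) {i : ι} (hi : i ∈ s) :
    (q i).totalDegree ≤ d := by
  set D := s.sup fun i => (q i).totalDegree
  have hle : ∀ i ∈ s, (q i).totalDegree ≤ D := fun i hi =>
    Finset.le_sup (f := fun i => (q i).totalDegree) hi
  suffices D ≤ d from (hle i hi).trans this
  by_contra! hD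
  obtain ⟨j, hj, hjD⟩ := Finset.exists_mem_eq_sup s ⟨i, hi⟩ fun i => (q i).totalDegree
  change D = _ at hjD
  have htop : ∑ i ∈ s, homogeneousComponent D (q i) * homogeneousComponent D (q i) = 0 := by
    calc _ = ∑ i ∈ s, homogeneousComponent (D + D) (q i * q i) :=
          Finset.sum_congr rfl fun i hi =>
            (homogeneousComponent_mul_of_totalDegree_le (hle i hi) (hle i hi)).symm
      _ = homogeneousComponent (D + D) (∑ i ∈ s, q i * q i) := (map_sum _ _ _).symm
      _ = 0 := homogeneousComponent_eq_zero _ _ (by omega)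
  have hqj := IsFormallyReal.eq_zero_of_sum_mul_self_eq_zero htop hj
  rw [hjD, homogeneousComponent_totalDegree_eq_zero_iff] at hqj
  rw [hqj, totalDegree_zero] at hjD
  omega

theorem pderiv_eq_C_of_totalDegree_le_one {q : MvPolynomial σ R} (hq : q.totalDegree ≤ 1)
    (i : σ) : pderiv i q = C (coeff (Finsupp.single i 1) q) := by
  classical
  ext m
  rw [coeff_pderiv, coeff_C]
  split_ifs with hm
  · simp [← hm]
  · have hdeg : m.degree ≠ 0 := by rwa [Ne, Finsupp.degree_eq_zero_iff, eq_comm]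
    rw [coeff_eq_zero_of_totalDegree_lt, zero_mul]
    change q.totalDegree < Finsupp.degree (m + Finsupp.single i 1)
    rw [map_add, Finsupp.degree_single]
    omega

theorem pderiv_pderiv_mul_self_of_totalDegree_le_one {q : MvPolynomial σ R}
    (hq : q.totalDegree ≤ 1) (i j : σ) :
    pderiv i (pderiv j (q * q)) =
      C (2 * (coeff (Finsupp.single i 1) q * coeff (Finsupp.single j 1) q)) := by
  simp only [pderiv_mul, map_add, pderiv_eq_C_of_totalDegree_le_one hq, pderiv_C, map_mul,
    map_ofNat]
  ring

end MvPolynomial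

namespace Matrix

variable {σ A : Type*} [Fintype σ]

noncomputable def toQuadraticMvPolynomial [CommSemiring A] (H : Matrix σ σ A) :
    MvPolynomial σ A :=
  ∑ i, ∑ j, X i * X j * C (H i j)

theorem isHomogeneous_toQuadraticMvPolynomial [CommSemiring A] (H : Matrix σ σ A) :
    H.toQuadraticMvPolynomial.IsHomogeneous 2 :=
  .sum _ _ _ fun i _ => .sum _ _ _ fun j _ =>
    ((isHomogeneous_X A i).mul (isHomogeneous_X A j)).mul (isHomogeneous_C σ (H i j))

theorem toQuadraticMvPolynomial_mul_transpose [CommSemiring A] {ι : Type*} [Fintype ι]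
    (L : Matrix σ ι A) :
    (L * Lᵀ).toQuadraticMvPolynomial =
      ∑ k, (∑ i, X i * C (L i k)) * (∑ i, X i * C (L i k)) := by
  simp only [toQuadraticMvPolynomial, Finset.sum_mul_sum]
  rw [Finset.sum_comm (s := (Finset.univ : Finset ι))]
  refine Finset.sum_congr rfl fun i _ => ?_
  rw [Finset.sum_comm (s := (Finset.univ : Finset ι))]
  refine Finset.sum_congr rfl fun j _ => ?_
  simp only [mul_apply, transpose_apply, map_sum, map_mul, Finset.mul_sum]
  exact Finset.sum_congr rfl fun k _ => by ring

theorem pderiv_toQuadraticMvPolynomial [CommSemiring A] (H : Matrix σ σ A) (j : σ) :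
    pderiv j H.toQuadraticMvPolynomial = ∑ k, C (H k j + H j k) * X k := by
  classical
  simp [toQuadraticMvPolynomial, pderiv_X, Pi.single_apply, Finset.sum_add_distrib, add_mul,
    mul_add, mul_ite]

theorem pderiv_pderiv_toQuadraticMvPolynomial [CommSemiring A] (H : Matrix σ σ A) (i j : σ) :
    pderiv i (pderiv j H.toQuadraticMvPolynomial) = C (H i j + H j i) := by
  classical
  simp [pderiv_toQuadraticMvPolynomial, pderiv_X, Pi.single_apply]

theorem isSumSq_toQuadraticMvPolynomial_iff [CommRing A] [IsFormallyReal (MvPolynomial σ A)]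
    {H : Matrix σ σ A} (hH : H.IsSymm) :
    IsSumSq H.toQuadraticMvPolynomial ↔ ∃ (a : ℕ) (L : Matrix σ (Fin a) A), H = L * Lᵀ := by
  refine ⟨fun h => ?_, ?_⟩
  · obtain ⟨a, q, hq⟩ := h.exists_eq_sum_mul_self
    have hdeg (k : Fin a) : (q k).totalDegree ≤ 1 :=
      totalDegree_le_of_totalDegree_sum_mul_self_le
        (hq ▸ H.isHomogeneous_toQuadraticMvPolynomial.totalDegree_le) (Finset.mem_univ k)
    refine ⟨a, of fun i k => coeff (Finsupp.single i 1) (q k), ?_⟩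
    ext i j
    have hij := congrArg (fun p => pderiv i (pderiv j p)) hq
    simp only [pderiv_pderiv_toQuadraticMvPolynomial, map_sum,
      pderiv_pderiv_mul_self_of_totalDegree_le_one (hdeg _), hH.apply i j] at hij
    rw [← map_sum, ← Finset.mul_sum, ← two_mul] at hij
    have : IsFormallyReal A := .of_injective C (C_injective σ A)
    simpa [mul_apply] using IsFormallyReal.two_mul_injective (C_injective σ A hij)
  · rintro ⟨a, L, rfl⟩
    rw [toQuadraticMvPolynomial_mul_transpose]
    exact .sum_mul_self _ _

end Matrix

theorem MvPolynomial.isSumSq_sum_X_inr_mul_X_inr_mul_rename_inl_iff {σ τ R : Type*} [Fintype σ]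
    [CommSemiring R] (H : Matrix σ σ (MvPolynomial τ R)) :
    IsSumSq (∑ i, ∑ j, X (Sum.inr i) * X (Sum.inr j) * rename Sum.inl (H i j) :
        MvPolynomial (τ ⊕ σ) R) ↔ IsSumSq H.toQuadraticMvPolynomial := by
  have hC (p : MvPolynomial τ R) : sumAlgEquiv R σ τ (rename Sum.inr p) = C p := by
    simpa using DFunLike.congr_fun (sumAlgEquiv_comp_rename_inr R σ τ) p
  let e := (renameEquiv R (Equiv.sumComm τ σ)).trans (sumAlgEquiv R σ τ)
  rw [← isSumSq_map_iff e.toRingEquiv]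
  simp [e, Matrix.toQuadraticMvPolynomial, sumAlgEquiv_X_inl, Function.comp_def, hC]

/-- (Ahmadi–Parrilo) A polynomial `f ∈ ℝ[x₁, …, xₙ]` is SOS-convex (its Hessian factors
as `L·Lᵀ` for some polynomial matrix `L`) if and only if the polynomial
`∑ i j, z_i z_j ∂²f/∂x_i∂x_j`, regarded as a polynomial in the `2n` variables
`x₁, …, xₙ, z₁, …, zₙ`, is a sum of squares. -/
theorem sos_convex_iff_isSumSq (n : ℕ) (f : MvPolynomial (Fin n) ℝ) :
    (∃ (a : ℕ) (L : Matrix (Fin n) (Fin a) (MvPolynomial (Fin n) ℝ)),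
        ∀ i j : Fin n, pderiv i (pderiv j f) = ∑ k : Fin a, L i k * L j k) ↔
      IsSumSq (∑ i : Fin n, ∑ j : Fin n,
        X (Sum.inr i) * X (Sum.inr j) * rename Sum.inl (pderiv i (pderiv j f)) :
          MvPolynomial (Fin n ⊕ Fin n) ℝ) := by
  open Matrix in
  calc _ ↔ ∃ (a : ℕ) (L : Matrix (Fin n) (Fin a) (MvPolynomial (Fin n) ℝ)),
          hessian f = L * Lᵀ := by
        simp only [← Matrix.ext_iff, mul_apply, transpose_apply, hessian, of_apply]
    _ ↔ IsSumSq (hessian f).toQuadraticMvPolynomial :=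
        (isSumSq_toQuadraticMvPolynomial_iff (isSymm_hessian f)).symm
    _ ↔ _ := (isSumSq_sum_X_inr_mul_X_inr_mul_rename_inl_iff (hessian f)).symm
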